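/- Let σ > 0, κ > 0 and K ≥ 0. Suppose E : ℝ → ℝ is differentiable on [0,∞) with E(t) ≥ 0, D : ℝ → ℝ is continuous on [0,∞) with D(t) ≥ 0, G : ℝ → ℝ is continuous on [0,∞), and suppose for all t ≥ 0: E′(t) + κ·D(t) ≤ 0, E(t) ≤ G(t), and ∫₀ᵗ (1+τ)^σ G(τ) dτ ≤ K. Then for all t ≥ 0, (1+t)^{1+σ}·E(t) + κ·∫₀ᵗ (1+τ)^{1+σ} D(τ) dτ ≤ E(0) + (1+σ)·K. -/

import Mathlib

open MeasureTheory

/-- Higher-weight energy estimate: from `E′ + κD ≤ 0`, `E ≤ G`, and a bound on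
the weighted integral of `G`, one gets the weighted bound with weight `(1+t)^{1+σ}`. -/
theorem stmt14 (σ κ K : ℝ) (hσ : 0 < σ) (hκ : 0 < κ) (hK : 0 ≤ K)
    (E E' D G : ℝ → ℝ)
    (hderiv : ∀ t ≥ (0 : ℝ), HasDerivWithinAt E (E' t) (Set.Ici 0) t)
    (hEnonneg : ∀ t ≥ (0 : ℝ), 0 ≤ E t)
    (hDcont : ContinuousOn D (Set.Ici 0))
    (hDnonneg : ∀ t ≥ (0 : ℝ), 0 ≤ D t)
    (hGcont : ContinuousOn G (Set.Ici 0))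
    (hineq : ∀ t ≥ (0 : ℝ), E' t + κ * D t ≤ 0)
    (hEG : ∀ t ≥ (0 : ℝ), E t ≤ G t)
    (hGint : ∀ t ≥ (0 : ℝ), (∫ τ in Set.Icc (0 : ℝ) t, (1 + τ) ^ σ * G τ) ≤ K) :
    ∀ t ≥ (0 : ℝ),
      (1 + t) ^ (1 + σ) * E t + κ * ∫ τ in Set.Icc (0 : ℝ) t, (1 + τ) ^ (1 + σ) * D τ ≤
        E 0 + (1 + σ) * K := by
  have hEcont : ContinuousOn E (Set.Ici 0) := fun s hs => (hderiv s hs).continuousWithinAt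
  -- weight functions are continuous on `Ici 0`
  have hw1 : ContinuousOn (fun τ : ℝ => (1 + τ) ^ (1 + σ)) (Set.Ici 0) := by
    apply ContinuousOn.rpow_const (by fun_prop)
    intro x hx
    exact Or.inl (by simp only [Set.mem_Ici] at hx; positivity)
  have hw2 : ContinuousOn (fun τ : ℝ => (1 + τ) ^ σ) (Set.Ici 0) := by
    apply ContinuousOn.rpow_const (by fun_prop)
    intro x hx
    exact Or.inl (by simp only [Set.mem_Ici] at hx; positivity)
  have hfD : ContinuousOn (fun τ : ℝ => (1 + τ) ^ (1 + σ) * D τ) (Set.Ici 0) := hw1.mul hDcont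
  have hfE : ContinuousOn (fun τ : ℝ => (1 + τ) ^ σ * E τ) (Set.Ici 0) := hw2.mul hEcont
  set φ : ℝ → ℝ := fun s => ∫ τ in (0:ℝ)..s, (1 + τ) ^ (1 + σ) * D τ with hφ
  set ψ : ℝ → ℝ := fun s => ∫ τ in (0:ℝ)..s, (1 + τ) ^ σ * E τ with hψ
  set F : ℝ → ℝ := fun s => (1 + s) ^ (1 + σ) * E s + κ * φ s - (1 + σ) * ψ s with hF
  -- derivatives of the primitives within `Ici 0`
  have hsubset : ∀ x : ℝ, 0 ≤ x → Set.uIcc (0:ℝ) x ⊆ Set.Ici 0 := by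
    intro x hx
    rw [Set.uIcc_of_le hx]
    exact fun y hy => hy.1
  have hprim : ∀ f : ℝ → ℝ, ContinuousOn f (Set.Ici 0) → ∀ x ∈ Set.Ici (0:ℝ),
      HasDerivWithinAt (fun s => ∫ τ in (0:ℝ)..s, f τ) (f x) (Set.Ici 0) x := by
    intro f hf x hx
    have hii : IntervalIntegrable f volume 0 x := (hf.mono (hsubset x hx)).intervalIntegrable
    rcases eq_or_lt_of_le (Set.mem_Ici.mp hx) with h0 | h0
    · subst h0
      refine intervalIntegral.integral_hasDerivWithinAt_right (t := Set.Ioi 0) hii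
        ⟨Set.Ici 0, Filter.mem_of_superset self_mem_nhdsWithin (Set.Ioi_subset_Ici le_rfl),
          hf.aestronglyMeasurable measurableSet_Ici⟩
        ((hf 0 hx).mono (Set.Ioi_subset_Ici le_rfl))
    · have hmem : Set.Ici (0:ℝ) ∈ nhds x := Ici_mem_nhds h0
      exact (intervalIntegral.integral_hasDerivAt_right hii
        ⟨Set.Ici 0, hmem, hf.aestronglyMeasurable measurableSet_Ici⟩
        (hf.continuousAt hmem)).hasDerivWithinAt
  have hφd : ∀ x ∈ Set.Ici (0:ℝ), HasDerivWithinAt φ ((1 + x) ^ (1 + σ) * D x) (Set.Ici 0) x :=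
    hprim _ hfD
  have hψd : ∀ x ∈ Set.Ici (0:ℝ), HasDerivWithinAt ψ ((1 + x) ^ σ * E x) (Set.Ici 0) x :=
    hprim _ hfE
  -- derivative of the weight
  have hwd : ∀ x : ℝ, 0 ≤ x →
      HasDerivAt (fun s : ℝ => (1 + s) ^ (1 + σ)) ((1 + σ) * (1 + x) ^ σ) x := by
    intro x hx
    have h1 : HasDerivAt (fun s : ℝ => 1 + s) 1 x := (hasDerivAt_id x).const_add 1
    have h2 : HasDerivAt (fun y : ℝ => y ^ (1 + σ))
        ((1 + σ) * (1 + x) ^ ((1 + σ) - 1)) (1 + x) :=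
      Real.hasDerivAt_rpow_const (Or.inl (by positivity))
    have := h2.comp x h1
    simpa [add_sub_cancel_left, Function.comp_def] using this
  -- F is antitone on Ici 0
  have hFcont : ContinuousOn F (Set.Ici 0) := by
    apply ContinuousOn.sub
    · exact ((hw1.mul hEcont).add (continuousOn_const.mul
        (fun x hx => (hφd x hx).continuousWithinAt)))
    · exact continuousOn_const.mul (fun x hx => (hψd x hx).continuousWithinAt)
  have hint : interior (Set.Ici (0:ℝ)) = Set.Ioi 0 := interior_Ici
  have hFanti : AntitoneOn F (Set.Ici 0) := by
    apply antitoneOn_of_hasDerivWithinAt_nonpos (convex_Ici 0) hFcont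
      (f' := fun x => (1 + x) ^ (1 + σ) * (E' x + κ * D x))
    · intro x hx
      rw [hint] at hx ⊢
      have hx0 : (0:ℝ) ≤ x := le_of_lt hx
      have hE := ((hderiv x hx0).mono (Set.Ioi_subset_Ici le_rfl))
      have hwx := ((hwd x hx0).hasDerivWithinAt (s := Set.Ioi 0))
      have hφx := (hφd x hx0).mono (Set.Ioi_subset_Ici le_rfl)
      have hψx := (hψd x hx0).mono (Set.Ioi_subset_Ici le_rfl)
      have : HasDerivWithinAt F
          (((1 + σ) * (1 + x) ^ σ * E x + (1 + x) ^ (1 + σ) * E' x)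
            + κ * ((1 + x) ^ (1 + σ) * D x) - (1 + σ) * ((1 + x) ^ σ * E x))
          (Set.Ioi 0) x :=
        ((hwx.mul hE).add (hφx.const_mul κ)).sub (hψx.const_mul (1 + σ))
      convert this using 1
      ring
    · intro x hx
      rw [hint] at hx
      have hx0 : (0:ℝ) ≤ x := le_of_lt hx
      have h1 : (0:ℝ) ≤ (1 + x) ^ (1 + σ) := Real.rpow_nonneg (by linarith) _
      exact mul_nonpos_of_nonneg_of_nonpos h1 (hineq x hx0)
  intro t ht
  have hFt : F t ≤ F 0 := hFanti Set.self_mem_Ici ht ht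
  have hF0 : F 0 = E 0 := by
    simp [hF, hφ, hψ, intervalIntegral.integral_same, Real.one_rpow]
  -- rewrite the Icc integrals as interval integrals
  have hIcc : ∀ f : ℝ → ℝ, (∫ τ in Set.Icc (0:ℝ) t, f τ) = ∫ τ in (0:ℝ)..t, f τ := by
    intro f
    rw [intervalIntegral.integral_of_le ht, integral_Icc_eq_integral_Ioc]
  -- compare ψ t with the G-integral
  have hψK : ψ t ≤ K := by
    have h1 : ψ t = ∫ τ in Set.Icc (0:ℝ) t, (1 + τ) ^ σ * E τ := (hIcc _).symm
    have hsub : Set.Icc (0:ℝ) t ⊆ Set.Ici 0 := fun y hy => hy.1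
    have hintE : IntegrableOn (fun τ : ℝ => (1 + τ) ^ σ * E τ) (Set.Icc 0 t) :=
      (hfE.mono hsub).integrableOn_compact isCompact_Icc
    have hintG : IntegrableOn (fun τ : ℝ => (1 + τ) ^ σ * G τ) (Set.Icc 0 t) :=
      ((hw2.mul hGcont).mono hsub).integrableOn_compact isCompact_Icc
    have h2 : (∫ τ in Set.Icc (0:ℝ) t, (1 + τ) ^ σ * E τ)
        ≤ ∫ τ in Set.Icc (0:ℝ) t, (1 + τ) ^ σ * G τ := by
      apply setIntegral_mono_on hintE hintG measurableSet_Icc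
      intro y hy
      have hy0 : (0:ℝ) ≤ y := hy.1
      exact mul_le_mul_of_nonneg_left (hEG y hy0) (Real.rpow_nonneg (by linarith) _)
    calc ψ t ≤ ∫ τ in Set.Icc (0:ℝ) t, (1 + τ) ^ σ * G τ := h1 ▸ h2
      _ ≤ K := hGint t ht
  have key : (1 + t) ^ (1 + σ) * E t + κ * φ t ≤ E 0 + (1 + σ) * ψ t := by
    have : F t = (1 + t) ^ (1 + σ) * E t + κ * φ t - (1 + σ) * ψ t := rfl
    linarith [hF0 ▸ hFt]
  have hfinal : (1 + σ) * ψ t ≤ (1 + σ) * K :=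
    mul_le_mul_of_nonneg_left hψK (by linarith)
  calc (1 + t) ^ (1 + σ) * E t + κ * ∫ τ in Set.Icc (0:ℝ) t, (1 + τ) ^ (1 + σ) * D τ
      = (1 + t) ^ (1 + σ) * E t + κ * φ t := by rw [hIcc]
    _ ≤ E 0 + (1 + σ) * ψ t := key
    _ ≤ E 0 + (1 + σ) * K := by linarith
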